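/- arXiv:math/0412417 — 3 statements merged into one kernel-verified Lean document; each statement's English description precedes it below -/
import Mathlib

section
/- p-equivalence of quandle matrices does not preserve the determinant: the integer matrices A = [[1,4,5,2,3],[3,2,1,5,4],[4,5,3,1,2],[5,3,2,4,1],[2,1,4,3,5]] and B = [[1,5,4,3,2],[3,2,1,5,4],[5,4,3,2,1],[2,1,5,4,3],[4,3,2,1,5]] satisfy det A = −825 and det B = −1875, yet B is obtained from A by p-equivalence via the permutation ρ = (1 5 3)(2 4): B i j = ρ(A (ρ⁻¹ i) (ρ⁻¹ j)) for all i, j (with entries regarded as elements of {1,…,5}). -/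
theorem Equiv.Perm.inv_apply_eq_of_rightInverse {α : Type*} {ρ : Equiv.Perm α} {f g : α → α}
    (hρ : ∀ i, ρ i = f i) (hfg : Function.RightInverse g f) (i : α) : ρ⁻¹ i = g i := by
  rw [Equiv.Perm.inv_eq_iff_eq, hρ, hfg i]

theorem det_map_val_add_one_A :
    (!![0,3,4,1,2; 2,1,0,4,3; 3,4,2,0,1; 4,2,1,3,0; 1,0,3,2,4].map
      fun x : Fin 5 => ((x : ℕ) : ℤ) + 1).det = -825 := by
  rw [show (!![0,3,4,1,2; 2,1,0,4,3; 3,4,2,0,1; 4,2,1,3,0; 1,0,3,2,4].map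
      fun x : Fin 5 => ((x : ℕ) : ℤ) + 1) =
      !![1,4,5,2,3; 3,2,1,5,4; 4,5,3,1,2; 5,3,2,4,1; 2,1,4,3,5] by decide]
  simp [Matrix.det_succ_row_zero, Fin.sum_univ_succ, Fin.succAbove]

theorem det_map_val_add_one_B :
    (!![0,4,3,2,1; 2,1,0,4,3; 4,3,2,1,0; 1,0,4,3,2; 3,2,1,0,4].map
      fun x : Fin 5 => ((x : ℕ) : ℤ) + 1).det = -1875 := by
  rw [show (!![0,4,3,2,1; 2,1,0,4,3; 4,3,2,1,0; 1,0,4,3,2; 3,2,1,0,4].map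
      fun x : Fin 5 => ((x : ℕ) : ℤ) + 1) =
      !![1,5,4,3,2; 3,2,1,5,4; 5,4,3,2,1; 2,1,5,4,3; 4,3,2,1,5] by decide]
  simp [Matrix.det_succ_row_zero, Fin.sum_univ_succ, Fin.succAbove]

/-- p-equivalence of quandle matrices does not preserve the determinant: the
matrices `A` and `B` below (with entries in `{1, …, 5}`, here encoded as `Fin 5`
with `i` standing for the integer `i + 1`) are p-equivalent via the permutation
`ρ = (1 5 3)(2 4)` (in 0-indexed form, `0 ↦ 2, 1 ↦ 3, 2 ↦ 4, 3 ↦ 1, 4 ↦ 0`), yet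
their integer determinants are `-825` and `-1875` respectively. -/
theorem stmt12 (A B : Matrix (Fin 5) (Fin 5) (Fin 5)) (ρ : Equiv.Perm (Fin 5))
    (hA : A = !![0,3,4,1,2; 2,1,0,4,3; 3,4,2,0,1; 4,2,1,3,0; 1,0,3,2,4])
    (hB : B = !![0,4,3,2,1; 2,1,0,4,3; 4,3,2,1,0; 1,0,4,3,2; 3,2,1,0,4])
    (hρ : ∀ i, ρ i = ![2, 3, 4, 1, 0] i) :
    (A.map fun x => ((x : ℕ) : ℤ) + 1).det = -825 ∧
    (B.map fun x => ((x : ℕ) : ℤ) + 1).det = -1875 ∧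
    (∀ i j, B i j = ρ (A (ρ⁻¹ i) (ρ⁻¹ j))) := by
  have hρinv := Equiv.Perm.inv_apply_eq_of_rightInverse hρ (g := ![4, 3, 0, 1, 2]) (by decide)
  subst hA hB
  refine ⟨det_map_val_add_one_A, det_map_val_add_one_B, ?_⟩
  simp only [hρ, hρinv]
  intro i j
  fin_cases i <;> fin_cases j <;> rfl
end

section
/- There are exactly 3 isomorphism classes of quandles with 3 elements: there exist quandle operations ▷₁, ▷₂, ▷₃ on Fin 3, pairwise non-isomorphic, such that every quandle operation on Fin 3 is isomorphic to one of them. Representatives are given by the matrices [[1,1,1],[2,2,2],[3,3,3]], [[1,3,2],[3,2,1],[2,1,3]], and [[1,1,1],[3,2,2],[2,3,3]] (entry in row i, column j being i ▷ j, with elements labeled 1,2,3). -/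
/-- A binary operation is a quandle operation if it is idempotent, all right
translations are bijections, and it is right self-distributive. -/
def IsQuandleOp {Q : Type*} (op : Q → Q → Q) : Prop :=
  (∀ a, op a a = a) ∧
  (∀ b, Function.Bijective fun a => op a b) ∧
  (∀ a b c, op (op a b) c = op (op a c) (op b c))

/-- Two quandle structures on `Fin n` are isomorphic if there is a bijection
intertwining the operations. -/
def QuandleIso {n : ℕ} (op₁ op₂ : Fin n → Fin n → Fin n) : Prop :=
  ∃ φ : Fin n ≃ Fin n, ∀ a b, φ (op₁ a b) = op₂ (φ a) (φ b)

instance IsQuandleOp.dec {n : ℕ} (op : Fin n → Fin n → Fin n) : Decidable (IsQuandleOp op) := by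
  unfold IsQuandleOp; infer_instance

instance QuandleIso.dec {n : ℕ} (op₁ op₂ : Fin n → Fin n → Fin n) : Decidable (QuandleIso op₁ op₂) := by
  unfold QuandleIso; infer_instance

set_option maxRecDepth 10000 in
set_option maxHeartbeats 4000000 in
lemma key14 : ∀ a b c d e f g h i : Fin 3,
    IsQuandleOp (fun x y => !![a,b,c; d,e,f; g,h,i] x y) →
      QuandleIso (fun x y => !![a,b,c; d,e,f; g,h,i] x y) (fun x y => !![0,0,0; 1,1,1; 2,2,2] x y) ∨
      QuandleIso (fun x y => !![a,b,c; d,e,f; g,h,i] x y) (fun x y => !![0,2,1; 2,1,0; 1,0,2] x y) ∨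
      QuandleIso (fun x y => !![a,b,c; d,e,f; g,h,i] x y) (fun x y => !![0,0,0; 2,1,1; 1,2,2] x y) := by
  decide

set_option maxRecDepth 10000 in
set_option maxHeartbeats 1000000 in
/-- There are exactly 3 isomorphism classes of quandles with 3 elements, with
representatives given by the matrices `[[1,1,1],[2,2,2],[3,3,3]]`,
`[[1,3,2],[3,2,1],[2,1,3]]` and `[[1,1,1],[3,2,2],[2,3,3]]` (here written
0-indexed, with elements `0, 1, 2` standing for `1, 2, 3`). -/
theorem stmt14 :
    ∃ op₁ op₂ op₃ : Fin 3 → Fin 3 → Fin 3,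
      (∀ i j, op₁ i j = (!![0,0,0; 1,1,1; 2,2,2] : Matrix (Fin 3) (Fin 3) (Fin 3)) i j) ∧
      (∀ i j, op₂ i j = (!![0,2,1; 2,1,0; 1,0,2] : Matrix (Fin 3) (Fin 3) (Fin 3)) i j) ∧
      (∀ i j, op₃ i j = (!![0,0,0; 2,1,1; 1,2,2] : Matrix (Fin 3) (Fin 3) (Fin 3)) i j) ∧
      IsQuandleOp op₁ ∧ IsQuandleOp op₂ ∧ IsQuandleOp op₃ ∧
      ¬ QuandleIso op₁ op₂ ∧ ¬ QuandleIso op₁ op₃ ∧ ¬ QuandleIso op₂ op₃ ∧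
      (∀ op : Fin 3 → Fin 3 → Fin 3, IsQuandleOp op →
        QuandleIso op op₁ ∨ QuandleIso op op₂ ∨ QuandleIso op op₃) := by
  refine ⟨fun i j => !![0,0,0; 1,1,1; 2,2,2] i j,
    fun i j => !![0,2,1; 2,1,0; 1,0,2] i j,
    fun i j => !![0,0,0; 2,1,1; 1,2,2] i j,
    fun _ _ => rfl, fun _ _ => rfl, fun _ _ => rfl, by decide, by decide, by decide,
    by decide, by decide, by decide, ?_⟩
  intro op hq
  have h : op = fun x y => !![op 0 0, op 0 1, op 0 2; op 1 0, op 1 1, op 1 2;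
      op 2 0, op 2 1, op 2 2] x y := by
    funext x y; fin_cases x <;> fin_cases y <;> rfl
  rw [h] at hq ⊢
  exact key14 _ _ _ _ _ _ _ _ _ hq
end

section
/- There are exactly 7 isomorphism classes of quandles with 4 elements: there exist quandle operations ▷₁, …, ▷₇ on Fin 4, pairwise non-isomorphic, such that every quandle operation on Fin 4 is isomorphic to one of them. -/
/-! Auxiliary machinery: quandle operations on `Fin 4` encoded as natural numbers. -/

/-- Decode digit `a` (base 4) of `n`. -/
def app (n a : Nat) : Nat := n / 4 ^ a % 4

/-- Decode entry `(a,b)` of a 16-digit base-4 table. -/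
def tApp (t a b : Nat) : Nat := t / 4 ^ (4 * a + b) % 4

/-- Encode a function `Fin 4 → Fin 4` as a natural number. -/
def encF (f : Fin 4 → Fin 4) : Nat :=
  (f 0).val + 4 * (f 1).val + 16 * (f 2).val + 64 * (f 3).val

def L0n : List Nat := [228, 180, 216, 120, 156, 108]
def L1n : List Nat := [228, 180, 198, 54, 135, 39]
def L2n : List Nat := [228, 108, 225, 45, 99, 39]
def L3n : List Nat := [228, 216, 225, 201, 210, 198]
def Pn : List Nat := [228, 180, 216, 120, 156, 108, 225, 177, 201, 57, 141, 45, 210, 114, 198, 54, 78, 30, 147, 99, 135, 39, 75, 27]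
def tabs : List Nat := [4289352960, 4285175040, 4280980800, 4289332560, 3681465600, 4205774160, 3378722460]

/-- Operation built from four column encodings. -/
def opN (n0 n1 n2 n3 a b : Nat) : Nat :=
  app (if b = 0 then n0 else if b = 1 then n1 else if b = 2 then n2 else n3) a

def distribB (n0 n1 n2 n3 : Nat) : Bool :=
  (List.range 4).all fun a => (List.range 4).all fun b => (List.range 4).all fun d =>
    opN n0 n1 n2 n3 (opN n0 n1 n2 n3 a b) d ==
      opN n0 n1 n2 n3 (opN n0 n1 n2 n3 a d) (opN n0 n1 n2 n3 b d)

def isoB (n0 n1 n2 n3 : Nat) : Bool :=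
  (List.range 7).any fun k => Pn.any fun p =>
    (List.range 4).all fun a => (List.range 4).all fun b =>
      app p (opN n0 n1 n2 n3 a b) == tApp (tabs.getD k 0) (app p a) (app p b)

set_option maxRecDepth 100000 in
theorem mainB : (L0n.all fun n0 => L1n.all fun n1 => L2n.all fun n2 => L3n.all fun n3 =>
    !distribB n0 n1 n2 n3 || isoB n0 n1 n2 n3) = true := by decide

/-- The seven representative quandle operations. -/
def reps : Fin 7 → Fin 4 → Fin 4 → Fin 4 := fun k a b =>
  ⟨tApp (tabs.getD k.val 0) a.val b.val, Nat.mod_lt _ (by omega)⟩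

theorem enc_app (f : Fin 4 → Fin 4) (a : Fin 4) : app (encF f) a.val = (f a).val := by
  have h0 := (f 0).isLt; have h1 := (f 1).isLt; have h2 := (f 2).isLt; have h3 := (f 3).isLt
  fin_cases a <;> simp [app, encF] <;> omega

set_option maxRecDepth 100000 in
theorem perm_mem : ∀ f : Fin 4 → Fin 4, Function.Injective f → encF f ∈ Pn := by decide

set_option maxRecDepth 100000 in
theorem col_mem0 : ∀ f : Fin 4 → Fin 4, Function.Injective f → f 0 = 0 → encF f ∈ L0n := by decide
set_option maxRecDepth 100000 in
theorem col_mem1 : ∀ f : Fin 4 → Fin 4, Function.Injective f → f 1 = 1 → encF f ∈ L1n := by decide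
set_option maxRecDepth 100000 in
theorem col_mem2 : ∀ f : Fin 4 → Fin 4, Function.Injective f → f 2 = 2 → encF f ∈ L2n := by decide
set_option maxRecDepth 100000 in
theorem col_mem3 : ∀ f : Fin 4 → Fin 4, Function.Injective f → f 3 = 3 → encF f ∈ L3n := by decide

set_option maxRecDepth 100000 in
theorem Pn_inj : ∀ p ∈ Pn, ∀ i < 4, ∀ j < 4, app p i = app p j → i = j := by decide

set_option maxRecDepth 100000 in
theorem reps_idem : ∀ (k : Fin 7) (a : Fin 4), reps k a a = a := by decide
set_option maxRecDepth 100000 in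
theorem reps_inj : ∀ (k : Fin 7) (b : Fin 4), Function.Injective (fun a => reps k a b) := by decide
set_option maxRecDepth 100000 in
theorem reps_dist : ∀ (k : Fin 7) (a b c : Fin 4),
    reps k (reps k a b) c = reps k (reps k a c) (reps k b c) := by decide

set_option maxRecDepth 100000 in
theorem nonisoB : ((List.range 7).all fun k => (List.range 7).all fun l => (k == l) ||
    Pn.all fun p => !((List.range 4).all fun a => (List.range 4).all fun b =>
      app p (tApp (tabs.getD k 0) a b) == tApp (tabs.getD l 0) (app p a) (app p b))) = true := by
  decide

/-- There are exactly 7 isomorphism classes of quandles with 4 elements. -/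
theorem stmt15 :
    ∃ ops : Fin 7 → (Fin 4 → Fin 4 → Fin 4),
      (∀ k, IsQuandleOp (ops k)) ∧
      (∀ k l, k ≠ l → ¬ QuandleIso (ops k) (ops l)) ∧
      (∀ op : Fin 4 → Fin 4 → Fin 4, IsQuandleOp op → ∃ k, QuandleIso op (ops k)) := by
  refine ⟨reps, fun k => ⟨reps_idem k,
    fun b => Finite.injective_iff_bijective.mp (reps_inj k b), reps_dist k⟩, ?_, ?_⟩
  · -- pairwise non-isomorphic
    rintro k l hkl ⟨φ, hφ⟩
    have hp : encF ⇑φ ∈ Pn := perm_mem ⇑φ φ.injective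
    have H := nonisoB
    simp only [List.all_eq_true, List.mem_range] at H
    have H2 := H k.val k.isLt l.val l.isLt
    rw [Bool.or_eq_true] at H2
    rcases H2 with h | h
    · exact hkl (Fin.ext (by simpa using h))
    · simp only [List.all_eq_true] at h
      have h3 := h (encF ⇑φ) hp
      rw [Bool.not_eq_true'] at h3
      have htrue : ((List.range 4).all fun a => (List.range 4).all fun b =>
          app (encF ⇑φ) (tApp (tabs.getD k.val 0) a b) ==
            tApp (tabs.getD l.val 0) (app (encF ⇑φ) a) (app (encF ⇑φ) b)) = true := by
        simp only [List.all_eq_true, List.mem_range, beq_iff_eq]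
        intro a ha b hb
        have hv := congrArg Fin.val (hφ ⟨a, ha⟩ ⟨b, hb⟩)
        rw [show tApp (tabs.getD k.val 0) a b = (reps k ⟨a, ha⟩ ⟨b, hb⟩).val from rfl,
          enc_app ⇑φ (reps k ⟨a, ha⟩ ⟨b, hb⟩), hv,
          show app (encF ⇑φ) a = (φ ⟨a, ha⟩).val from enc_app ⇑φ ⟨a, ha⟩,
          show app (encF ⇑φ) b = (φ ⟨b, hb⟩).val from enc_app ⇑φ ⟨b, hb⟩]
        rfl
      rw [htrue] at h3
      exact Bool.noConfusion h3
  · -- completeness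
    rintro op ⟨h1, h2, h3⟩
    have hinj : ∀ b, Function.Injective fun a => op a b := fun b => (h2 b).injective
    have hm0 : encF (fun a => op a 0) ∈ L0n := col_mem0 _ (hinj 0) (h1 0)
    have hm1 : encF (fun a => op a 1) ∈ L1n := col_mem1 _ (hinj 1) (h1 1)
    have hm2 : encF (fun a => op a 2) ∈ L2n := col_mem2 _ (hinj 2) (h1 2)
    have hm3 : encF (fun a => op a 3) ∈ L3n := col_mem3 _ (hinj 3) (h1 3)
    set N0 := encF (fun a => op a 0) with hN0
    set N1 := encF (fun a => op a 1) with hN1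
    set N2 := encF (fun a => op a 2) with hN2
    set N3 := encF (fun a => op a 3) with hN3
    have key := mainB
    simp only [List.all_eq_true] at key
    have hg := key N0 hm0 N1 hm1 N2 hm2 N3 hm3
    have hop : ∀ a b : Fin 4, opN N0 N1 N2 N3 a.val b.val = (op a b).val := by
      intro a b
      fin_cases b
      · exact enc_app (fun a => op a 0) a
      · exact enc_app (fun a => op a 1) a
      · exact enc_app (fun a => op a 2) a
      · exact enc_app (fun a => op a 3) a
    have hd : distribB N0 N1 N2 N3 = true := by
      simp only [distribB, List.all_eq_true, List.mem_range, beq_iff_eq]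
      intro a ha b hb d hd
      show opN N0 N1 N2 N3 (opN N0 N1 N2 N3 (⟨a, ha⟩ : Fin 4).val (⟨b, hb⟩ : Fin 4).val)
            (⟨d, hd⟩ : Fin 4).val =
          opN N0 N1 N2 N3 (opN N0 N1 N2 N3 (⟨a, ha⟩ : Fin 4).val (⟨d, hd⟩ : Fin 4).val)
            (opN N0 N1 N2 N3 (⟨b, hb⟩ : Fin 4).val (⟨d, hd⟩ : Fin 4).val)
      rw [hop, hop, hop, hop, hop]
      exact congrArg Fin.val (h3 ⟨a, ha⟩ ⟨b, hb⟩ ⟨d, hd⟩)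
    rw [hd, Bool.not_true, Bool.false_or] at hg
    simp only [isoB, List.any_eq_true, List.all_eq_true, List.mem_range, beq_iff_eq] at hg
    obtain ⟨k, hk7, p, hpP, hiso⟩ := hg
    refine ⟨⟨k, hk7⟩, ?_⟩
    have hlt : ∀ i : Fin 4, app p i.val < 4 := fun i => Nat.mod_lt _ (by omega)
    set f : Fin 4 → Fin 4 := fun i => ⟨app p i.val, hlt i⟩ with hf
    have hfinj : Function.Injective f := by
      intro i j hij
      exact Fin.ext (Pn_inj p hpP i.val i.isLt j.val j.isLt (congrArg Fin.val hij))
    refine ⟨Equiv.ofBijective f (Finite.injective_iff_bijective.mp hfinj), fun a b => ?_⟩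
    apply Fin.ext
    show app p (op a b).val = tApp (tabs.getD k 0) (app p a.val) (app p b.val)
    rw [← hop a b]
    exact hiso a.val a.isLt b.val b.isLt
end
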